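/- arXiv:1007.0163 — 2 statements merged into one kernel-verified Lean document; each statement's English description precedes it below -/
import Mathlib

section
/- (Lemma, part c.) Fix n ≥ 1 and 1 ≤ k ≤ n, working in the polynomial ring P defined in the context. Let S ⊆ P be a good subset, let w ∈ S, and let i ≠ j be indices such that i does not appear in w and such that every monomial of w with nonzero coefficient contains the index j exactly d times. Write u_{ij}(s)·w = Σ_{l=0}^{d} s^l · w_l with w_l ∈ P independent of s. Then the constant coefficient satisfies w_0 = w, and both w_0 and the leading coefficient w_d belong to ⋃_{v∈S} ℂv. -/
open MvPolynomial

/-- Indexing set: `k`-element subsets of `{1,…,n}`. -/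
abbrev FermionIdx (n k : ℕ) := {I : Finset (Fin n) // I.card = k}

/-- The polynomial ring `P` over `ℂ` in commuting variables `X_I` indexed by
`k`-element subsets of `{1,…,n}`, modelling `S(Λ^k ℂⁿ)`. -/
abbrev FermionPoly (n k : ℕ) := MvPolynomial (FermionIdx n k) ℂ

/-- The transvection `u_{ij}(s)` acting on `P` as a `ℂ`-algebra endomorphism:
`X_I ↦ X_I` if `j ∉ I` or `{i,j} ⊆ I`, and
`X_I ↦ X_I + (−1)^c·s·X_{(I∖{j})∪{i}}` if `j ∈ I`, `i ∉ I`, where `c` is the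
number of elements of `I` strictly between `min i j` and `max i j`. -/
noncomputable def transvect (n k : ℕ) (i j : Fin n) (s : ℂ) :
    FermionPoly n k →ₐ[ℂ] FermionPoly n k :=
  MvPolynomial.aeval (fun I : FermionIdx n k =>
    if h : j ∈ I.1 ∧ i ∉ I.1 then
      MvPolynomial.X I +
        (((-1 : ℂ) ^ ((I.1.filter (fun a => min i j < a ∧ a < max i j)).card)) * s) •
          MvPolynomial.X (⟨insert i (I.1.erase j), by
            rcases h with ⟨hj, hi⟩
            have hk : 0 < I.1.card := Finset.card_pos.mpr ⟨j, hj⟩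
            rw [Finset.card_insert_of_notMem
                (fun hm => hi (Finset.mem_of_mem_erase hm)),
              Finset.card_erase_of_mem hj]
            rw [I.2] at hk ⊢
            omega⟩ : FermionIdx n k)
    else MvPolynomial.X I)

/-- The sign `ε(π, I) ∈ {±1}` of the permutation sorting the list
`(π(i₁),…,π(i_k))`, computed as `(−1)^{#inversions}`. -/
noncomputable def signEps (n : ℕ) (π : Equiv.Perm (Fin n)) (I : Finset (Fin n)) : ℂ :=
  (-1 : ℂ) ^ ((I ×ˢ I).filter (fun p => p.1 < p.2 ∧ π p.2 < π p.1)).card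

/-- The action of `π ∈ S_n` on `P` by `ℂ`-algebra automorphisms:
`π·X_I = ε(π,I)·X_{π(I)}`. -/
noncomputable def permAct (n k : ℕ) (π : Equiv.Perm (Fin n)) :
    FermionPoly n k →ₐ[ℂ] FermionPoly n k :=
  MvPolynomial.aeval (fun I : FermionIdx n k =>
    signEps n π I.1 •
      MvPolynomial.X (⟨I.1.image π, by
        rw [Finset.card_image_of_injective _ π.injective, I.2]⟩ : FermionIdx n k))

/-- The torus action `D_t` on `P`: `D_t(X_I) = (Π_{a∈I} t_a)·X_I`. -/
noncomputable def torusAct (n k : ℕ) (t : Fin n → ℂˣ) :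
    FermionPoly n k →ₐ[ℂ] FermionPoly n k :=
  MvPolynomial.aeval (fun I : FermionIdx n k =>
    (∏ a ∈ I.1, (t a : ℂ)) • MvPolynomial.X I)

/-- `w` is a weight vector of weight `r ∈ ℤⁿ` if
`D_t(w) = (Π_a t_a^{r_a})·w` for all `t ∈ (ℂˣ)ⁿ`. -/
def IsWeightVector (n k : ℕ) (w : FermionPoly n k) (r : Fin n → ℤ) : Prop :=
  ∀ t : Fin n → ℂˣ, torusAct n k t w = (∏ a, (t a : ℂ) ^ (r a)) • w

/-- The index `i` appears in `w` if some monomial of `w` with nonzero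
coefficient contains a variable `X_I` with `i ∈ I`. -/
def AppearsIn (n k : ℕ) (i : Fin n) (w : FermionPoly n k) : Prop :=
  ∃ mono ∈ w.support, ∃ I ∈ mono.support, i ∈ I.1

/-- The number of times index `j` occurs in a monomial, counted with
multiplicity over its variables. -/
def idxMultiplicity (n k : ℕ) (j : Fin n) (mono : FermionIdx n k →₀ ℕ) : ℕ :=
  ∑ I ∈ mono.support, if j ∈ I.1 then mono I else 0

/-- `S ⊆ P` is good if `⋃_{w∈S} ℂw` is stable under the `S_n`-action and every
element of `S` is a weight vector. -/
def IsGood (n k : ℕ) (S : Set (FermionPoly n k)) : Prop :=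
  (∀ π : Equiv.Perm (Fin n), ∀ w ∈ S, ∃ v ∈ S, ∃ c : ℂ, permAct n k π w = c • v) ∧
  (∀ w ∈ S, ∃ r : Fin n → ℤ, IsWeightVector n k w r)

/-! Replacing `s` by a formal variable turns `u_{ij}(s)` into an algebra map `P → P[s]`; a
polynomial over the domain `P` is determined by its values at the infinitely many constants, so
the `w_l` are its coefficients. As `i` does not appear in `w`, every variable `X_I` of `w` with
`j ∈ I` is sent to `X_I + s · π X_I` for the transposition `π = (i j)`, and the others are fixed
by both `u_{ij}(s)` and `π`. Every monomial of `w` contains `j` exactly `d` times, so the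
coefficient of `s^d` is `π w`, which lies in `⋃_{v ∈ S} ℂv` because `S` is good. -/

open Finset
open scoped Polynomial

namespace Polynomial

theorem coeff_prod_sum_of_natDegree_le {R ι : Type*} [CommSemiring R] (s : Finset ι)
    (f : ι → R[X]) (e : ι → ℕ) (h : ∀ x ∈ s, (f x).natDegree ≤ e x) :
    (∏ x ∈ s, f x).coeff (∑ x ∈ s, e x) = ∏ x ∈ s, (f x).coeff (e x) := by
  induction s using Finset.cons_induction with
  | empty => simp
  | cons a s ha ih =>
    rw [prod_cons, sum_cons, coeff_mul_add_eq_of_natDegree_le (h a (mem_cons_self a s))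
        ((natDegree_prod_le _ _).trans (sum_le_sum fun x hx => h x (mem_cons_of_mem hx))),
      ih fun x hx => h x (mem_cons_of_mem hx), prod_cons]

theorem coeff_eq_of_forall_eval_eq_sum {R A : Type*} [CommRing R] [Infinite R] [CommRing A]
    [IsDomain A] [Algebra R A] [FaithfulSMul R A] (p : A[X]) (N : ℕ) (c : ℕ → A)
    (h : ∀ s : R, p.eval (algebraMap R A s) = ∑ l ∈ range N, s ^ l • c l)
    (hc : ∀ l, N ≤ l → c l = 0) (l : ℕ) : p.coeff l = c l := by
  set q : A[X] := ∑ l ∈ range N, C (c l) * X ^ l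
  have hpq : p - q = 0 := by
    apply eq_zero_of_infinite_isRoot
    refine (Set.infinite_range_of_injective (FaithfulSMul.algebraMap_injective R A)).mono ?_
    rintro _ ⟨s, rfl⟩
    simp only [Set.mem_ofPred_eq, IsRoot.def, eval_sub, h, q, eval_finsetSum, eval_mul, eval_C,
      eval_pow, eval_X, Algebra.smul_def, map_pow, mul_comm, sub_self]
  rw [sub_eq_zero.mp hpq, finsetSum_coeff]
  simp only [coeff_C_mul_X_pow, sum_ite_eq, mem_range]
  split_ifs with hl
  · rfl
  · exact (hc l (not_lt.mp hl)).symm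

end Polynomial

section Swap

variable {α : Type*} [DecidableEq α] {i j : α} {I : Finset α}

theorem Finset.image_swap_of_notMem_of_notMem (hi : i ∉ I) (hj : j ∉ I) :
    I.image (Equiv.swap i j) = I := by
  ext x
  simp only [mem_image, Equiv.swap_apply_def]
  grind

theorem Finset.image_swap_of_notMem_of_mem (hi : i ∉ I) (hj : j ∈ I) :
    I.image (Equiv.swap i j) = insert i (I.erase j) := by
  ext x
  simp only [mem_image, mem_insert, mem_erase, Equiv.swap_apply_def]
  grind

variable [LinearOrder α]

theorem Finset.filter_swap_inversions_eq_empty (hi : i ∉ I) (hj : j ∉ I) :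
    (I ×ˢ I).filter (fun p => p.1 < p.2 ∧ Equiv.swap i j p.2 < Equiv.swap i j p.1) = ∅ := by
  ext ⟨a, b⟩
  simp only [Equiv.swap_apply_def, notMem_empty, iff_false]
  grind

/-- The inversions of `swap i j` on `I ∋ j` are the pairs `{a, j}` with `a` strictly between
`i` and `j`. -/
theorem Finset.card_filter_swap_inversions (hi : i ∉ I) (hj : j ∈ I) :
    #((I ×ˢ I).filter (fun p => p.1 < p.2 ∧ Equiv.swap i j p.2 < Equiv.swap i j p.1)) =
      #(I.filter (fun a => min i j < a ∧ a < max i j)) := by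
  symm
  apply card_nbij (fun a => (min a j, max a j))
  · intro a ha
    simp only [coe_filter, Set.mem_ofPred_eq, Equiv.swap_apply_def] at ha ⊢
    grind
  · intro a _ b _ h
    simp only [Prod.mk.injEq] at h
    grind
  · rintro ⟨a, b⟩ h
    simp only [coe_filter, Set.mem_ofPred_eq, Equiv.swap_apply_def, Set.mem_image] at h ⊢
    grind

end Swap

section Transvection

variable {n k : ℕ} {i j : Fin n}

theorem signEps_swap_of_notMem_of_notMem {I : Finset (Fin n)} (hi : i ∉ I) (hj : j ∉ I) :
    signEps n (Equiv.swap i j) I = 1 := by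
  rw [signEps, filter_swap_inversions_eq_empty hi hj, card_empty, pow_zero]

theorem signEps_swap_of_notMem_of_mem {I : Finset (Fin n)} (hi : i ∉ I) (hj : j ∈ I) :
    signEps n (Equiv.swap i j) I = (-1) ^ #(I.filter (fun a => min i j < a ∧ a < max i j)) := by
  rw [signEps, card_filter_swap_inversions hi hj]

theorem permAct_swap_X_of_notMem_of_notMem {I : FermionIdx n k} (hi : i ∉ I.1) (hj : j ∉ I.1) :
    permAct n k (Equiv.swap i j) (X I) = X I := by
  rw [permAct, MvPolynomial.aeval_X, signEps_swap_of_notMem_of_notMem hi hj, one_smul]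
  congr
  exact image_swap_of_notMem_of_notMem hi hj

variable (n k i j) in
/-- The coefficient of `s` in `u_{ij}(s) · X_I`. -/
noncomputable def transvectShift (I : FermionIdx n k) : FermionPoly n k :=
  if j ∈ I.1 ∧ i ∉ I.1 then permAct n k (Equiv.swap i j) (X I) else 0

theorem transvect_X (s : ℂ) (I : FermionIdx n k) :
    transvect n k i j s (X I) = X I + s • transvectShift n k i j I := by
  rw [transvect, MvPolynomial.aeval_X, transvectShift]
  split_ifs with h
  · rw [permAct, MvPolynomial.aeval_X, signEps_swap_of_notMem_of_mem h.2 h.1, mul_comm,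
      mul_smul]
    congr
    exact (image_swap_of_notMem_of_mem h.2 h.1).symm
  · rw [smul_zero, add_zero]

theorem transvect_zero : transvect n k i j 0 = AlgHom.id ℂ (FermionPoly n k) := by
  refine MvPolynomial.algHom_ext fun I => ?_
  rw [transvect_X, zero_smul, add_zero, AlgHom.id_apply]

variable (n k i j) in
/-- `u_{ij}(s)` with `s` kept as the polynomial variable. -/
noncomputable def transvectPoly : FermionPoly n k →ₐ[ℂ] (FermionPoly n k)[X] :=
  MvPolynomial.aeval fun I =>
    Polynomial.C (transvectShift n k i j I) * Polynomial.X + Polynomial.C (X I)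

theorem eval_transvectPoly (s : ℂ) (w : FermionPoly n k) :
    (transvectPoly n k i j w).eval (MvPolynomial.C s) = transvect n k i j s w := by
  suffices h : ((Polynomial.aeval (MvPolynomial.C s)).restrictScalars ℂ).comp
      (transvectPoly n k i j) = transvect n k i j s by
    rw [← h, AlgHom.comp_apply, AlgHom.coe_restrictScalars', Polynomial.coe_aeval_eq_eval]
  refine MvPolynomial.algHom_ext fun I => ?_
  simp only [AlgHom.comp_apply, transvectPoly, MvPolynomial.aeval_X, AlgHom.coe_restrictScalars',
    map_add, map_mul, Polynomial.aeval_C, Polynomial.aeval_X, transvect_X,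
    Algebra.algebraMap_self, RingHom.id_apply, MvPolynomial.smul_eq_C_mul, add_comm, mul_comm]

theorem coeff_zero_transvectPoly (w : FermionPoly n k) :
    (transvectPoly n k i j w).coeff 0 = w := by
  rw [Polynomial.coeff_zero_eq_eval_zero, ← map_zero MvPolynomial.C, eval_transvectPoly,
    transvect_zero, AlgHom.id_apply]

theorem natDegree_transvectPoly_X_le (I : FermionIdx n k) :
    (transvectPoly n k i j (X I)).natDegree ≤ if j ∈ I.1 then 1 else 0 := by
  rw [transvectPoly, MvPolynomial.aeval_X]
  split_ifs with hj
  · exact Polynomial.natDegree_linear_le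
  · simp [transvectShift, hj]

theorem coeff_transvectPoly_X {I : FermionIdx n k} (hi : i ∉ I.1) :
    (transvectPoly n k i j (X I)).coeff (if j ∈ I.1 then 1 else 0) =
      permAct n k (Equiv.swap i j) (X I) := by
  rw [transvectPoly, MvPolynomial.aeval_X]
  split_ifs with hj
  · simp [transvectShift, hj, hi]
  · simp [transvectShift, hj, permAct_swap_X_of_notMem_of_notMem hi hj]

theorem coeff_transvectPoly_monomial {m : FermionIdx n k →₀ ℕ} (hm : ∀ I ∈ m.support, i ∉ I.1)
    (c : ℂ) : (transvectPoly n k i j (monomial m c)).coeff (idxMultiplicity n k j m) =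
      permAct n k (Equiv.swap i j) (monomial m c) := by
  have hmult : idxMultiplicity n k j m = ∑ I ∈ m.support, m I * if j ∈ I.1 then 1 else 0 := by
    simp only [idxMultiplicity, mul_ite, mul_one, mul_zero]
  rw [MvPolynomial.monomial_eq, Finsupp.prod, map_mul, map_mul, ← MvPolynomial.algebraMap_eq,
    AlgHom.commutes, AlgHom.commutes, Polynomial.algebraMap_apply, Polynomial.coeff_C_mul,
    map_prod, map_prod, hmult, Polynomial.coeff_prod_sum_of_natDegree_le]
  · congr 1
    refine prod_congr rfl fun I hI => ?_
    rw [map_pow, map_pow, Polynomial.coeff_pow_of_natDegree_le (natDegree_transvectPoly_X_le I),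
      coeff_transvectPoly_X (hm I hI)]
  · intro I _
    rw [map_pow]
    exact Polynomial.natDegree_pow_le_of_le _ (natDegree_transvectPoly_X_le I)

theorem coeff_transvectPoly_eq_permAct_swap {w : FermionPoly n k} (hi : ¬ AppearsIn n k i w)
    {d : ℕ} (hd : ∀ m ∈ w.support, idxMultiplicity n k j m = d) :
    (transvectPoly n k i j w).coeff d = permAct n k (Equiv.swap i j) w := by
  simp only [AppearsIn, not_exists, not_and] at hi
  conv_lhs => rw [w.as_sum]
  conv_rhs => rw [w.as_sum]
  rw [map_sum, map_sum, Polynomial.finsetSum_coeff]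
  refine sum_congr rfl fun m hm => ?_
  rw [← hd m hm, coeff_transvectPoly_monomial (hi m hm)]

end Transvection

theorem stmt_6_general (n k : ℕ)
    (S : Set (FermionPoly n k)) (hS : IsGood n k S)
    (w : FermionPoly n k) (hwS : w ∈ S)
    (i j : Fin n) (hi : ¬ AppearsIn n k i w)
    (d : ℕ) (hd : ∀ mono ∈ w.support, idxMultiplicity n k j mono = d)
    (N : ℕ) (coeffs : ℕ → FermionPoly n k)
    (hrep : ∀ s : ℂ,
      transvect n k i j s w = ∑ l ∈ Finset.range N, s ^ l • coeffs l)
    (hpad : ∀ l, N ≤ l → coeffs l = 0) :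
    coeffs 0 = w ∧
    (∃ v ∈ S, ∃ c : ℂ, coeffs 0 = c • v) ∧
    (∃ v ∈ S, ∃ c : ℂ, coeffs d = c • v) := by
  have hcoeffs (l : ℕ) : coeffs l = (transvectPoly n k i j w).coeff l :=
    (Polynomial.coeff_eq_of_forall_eval_eq_sum _ N coeffs
      (fun s => by rw [MvPolynomial.algebraMap_eq, eval_transvectPoly, hrep]) hpad l).symm
  have h0 : coeffs 0 = w := by rw [hcoeffs, coeff_zero_transvectPoly]
  obtain ⟨v, hv, c, hvc⟩ := hS.1 (Equiv.swap i j) w hwS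
  refine ⟨h0, ⟨w, hwS, 1, by rw [h0, one_smul]⟩, v, hv, c, ?_⟩
  rw [hcoeffs, coeff_transvectPoly_eq_permAct_swap hi hd, hvc]

/-- Lemma, part c: for a good subset `S` and `w ∈ S` as in the
lemma, the constant coefficient of `u_{ij}(s)·w` equals `w`, and both the
constant and the leading coefficient belong to `⋃_{v∈S} ℂv`. -/
theorem stmt_6 (n k : ℕ) (hn : 1 ≤ n) (hk1 : 1 ≤ k) (hkn : k ≤ n)
    (S : Set (FermionPoly n k)) (hS : IsGood n k S)
    (w : FermionPoly n k) (hwS : w ∈ S)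
    (i j : Fin n) (hij : i ≠ j) (hi : ¬ AppearsIn n k i w)
    (d : ℕ) (hd : ∀ mono ∈ w.support, idxMultiplicity n k j mono = d)
    (N : ℕ) (coeffs : ℕ → FermionPoly n k)
    (hrep : ∀ s : ℂ,
      transvect n k i j s w = ∑ l ∈ Finset.range N, s ^ l • coeffs l)
    (hpad : ∀ l, N ≤ l → coeffs l = 0) :
    coeffs 0 = w ∧
    (∃ v ∈ S, ∃ c : ℂ, coeffs 0 = c • v) ∧
    (∃ v ∈ S, ∃ c : ℂ, coeffs d = c • v) :=
  stmt_6_general n k S hS w hwS i j hi d hd N coeffs hrep hpad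
end

section
/- Let n ≥ 1, let ψ be an n×n complex matrix with ψᵀ = −ψ, let g be an n×n complex unitary matrix, and set ψ' = g·ψ·gᵀ. For a 6-element subset I = {i₁ < i₂ < ⋯ < i₆} of {1,…,n} define Pf_I(ψ) = Σ_{π∈S₆} sgn(π)·ψ_{i_{π(1)} i_{π(2)}}·ψ_{i_{π(3)} i_{π(4)}}·ψ_{i_{π(5)} i_{π(6)}}. Then Σ_{I ⊆ {1,…,n}, |I|=6} |Pf_I(ψ')|² = Σ_{I ⊆ {1,…,n}, |I|=6} |Pf_I(ψ)|². -/
/-- For a 6-element subset `I = {i₁ < ⋯ < i₆}` of `{1,…,n}`, the quantity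
`Pf_I(ψ) = Σ_{π∈S₆} sgn(π)·ψ_{i_{π(1)}i_{π(2)}}·ψ_{i_{π(3)}i_{π(4)}}·ψ_{i_{π(5)}i_{π(6)}}`. -/
noncomputable def pfSix (n : ℕ) (ψ : Matrix (Fin n) (Fin n) ℂ)
    (I : Finset (Fin n)) (hI : I.card = 6) : ℂ :=
  ∑ π : Equiv.Perm (Fin 6),
    ((Equiv.Perm.sign π : ℤ) : ℂ)
      * ψ (I.orderIsoOfFin hI (π 0) : Fin n) (I.orderIsoOfFin hI (π 1) : Fin n)
      * ψ (I.orderIsoOfFin hI (π 2) : Fin n) (I.orderIsoOfFin hI (π 3) : Fin n)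
      * ψ (I.orderIsoOfFin hI (π 4) : Fin n) (I.orderIsoOfFin hI (π 5) : Fin n)

/-!
Extend `Pf` to all 6-tuples `x` of indices as the antisymmetrization of
`ψ_{x₀x₁} ψ_{x₂x₃} ψ_{x₄x₅}`. This tuple function transforms under `ψ ↦ gψgᵀ` by the sixth
tensor power `g^{⊗6}`, because each factor `ψ ↦ gψgᵀ` is the action of `g ⊗ g` on a pair of
slots. Since `g^{⊗6}` is unitary, the sum of `|Pf_x|²` over all tuples is invariant. That sum
is `6!` times the sum over 6-subsets: the tuple function vanishes on tuples with a repeated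
index, and each injective tuple is a sorted subset composed with a permutation, which changes
`Pf` only by a sign.
-/

open Finset Equiv

namespace Matrix

variable {ι κ α R : Type*} [Fintype ι]

def tensorPow (ι : Type*) [Fintype ι] [CommMonoid R] (g : Matrix α α R) :
    Matrix (ι → α) (ι → α) R :=
  of fun x y => ∏ t, g (x t) (y t)

section CommSemiring

variable [CommSemiring R]

lemma tensorPow_one [DecidableEq α] : tensorPow ι (1 : Matrix α α R) = 1 := by
  ext x y
  simp only [tensorPow, one_apply, of_apply, prod_boole, mem_univ, forall_const, funext_iff]

lemma conjTranspose_tensorPow [StarRing R] (g : Matrix α α R) :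
    (tensorPow ι g)ᴴ = tensorPow ι gᴴ := by
  ext x y
  simp [tensorPow, conjTranspose_apply, star_prod]

variable [DecidableEq ι] [Fintype κ] [DecidableEq κ] [Fintype α]

lemma tensorPow_mul (g h : Matrix α α R) :
    tensorPow ι (g * h) = tensorPow ι g * tensorPow ι h := by
  ext x y
  simp only [tensorPow, mul_apply, of_apply, Fintype.prod_sum, ← prod_mul_distrib]

lemma tensorPow_mulVec_apply (g : Matrix α α R) (F : (ι → α) → R) (x : ι → α) :
    (tensorPow ι g *ᵥ F) x = ∑ y, (∏ t, g (x t) (y t)) * F y := rfl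

lemma tensorPow_mulVec_comp_equiv (g : Matrix α α R) (e : κ ≃ ι) (F : (κ → α) → R) :
    tensorPow ι g *ᵥ (fun y => F (y ∘ e)) = fun x => (tensorPow κ g *ᵥ F) (x ∘ e) := by
  ext x
  simp only [tensorPow_mulVec_apply]
  refine Fintype.sum_equiv (e.arrowCongr (Equiv.refl α)).symm _ _ fun y => ?_
  congr 1
  exact (e.prod_comp _).symm

lemma tensorPow_mulVec_prod (g : Matrix α α R) (F : κ → (ι → α) → R) :
    tensorPow (κ × ι) g *ᵥ (fun y => ∏ k, F k (fun i => y (k, i)))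
      = fun x => ∏ k, (tensorPow ι g *ᵥ F k) (fun i => x (k, i)) := by
  ext x
  simp only [tensorPow_mulVec_apply, Fintype.prod_sum]
  refine Fintype.sum_equiv (Equiv.curry κ ι α) _ _ fun y => ?_
  rw [Fintype.prod_prod_type, ← prod_mul_distrib]
  rfl

lemma tensorPow_fin_two_mulVec (g B : Matrix α α R) :
    tensorPow (Fin 2) g *ᵥ (fun p => B (p 0) (p 1)) = fun x => (g * B * gᵀ) (x 0) (x 1) := by
  ext x
  simp only [tensorPow_mulVec_apply, Fin.prod_univ_two, mul_apply, transpose_apply, sum_mul]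
  rw [← (piFinTwoEquiv fun _ => α).symm.sum_comp, Fintype.sum_prod_type, sum_comm]
  refine sum_congr rfl fun c _ => sum_congr rfl fun d _ => ?_
  simp only [piFinTwoEquiv_symm_apply, Fin.cons_zero, Fin.cons_one]
  ring

end CommSemiring

lemma tensorPow_mem_unitaryGroup [DecidableEq ι] [CommRing R] [StarRing R] [Fintype α]
    [DecidableEq α] {g : Matrix α α R} (hg : g ∈ unitaryGroup α R) :
    tensorPow ι g ∈ unitaryGroup (ι → α) R := by
  rw [mem_unitaryGroup_iff, star_eq_conjTranspose, conjTranspose_tensorPow, ← tensorPow_mul,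
    ← star_eq_conjTranspose, mem_unitaryGroup_iff.mp hg, tensorPow_one]

lemma sum_norm_sq_mulVec_of_mem_unitaryGroup {m 𝕜 : Type*} [Fintype m] [DecidableEq m]
    [RCLike 𝕜] {U : Matrix m m 𝕜} (hU : U ∈ unitaryGroup m 𝕜) (v : m → 𝕜) :
    ∑ i, ‖(U *ᵥ v) i‖ ^ 2 = ∑ i, ‖v i‖ ^ 2 := by
  have hdot : star (U *ᵥ v) ⬝ᵥ (U *ᵥ v) = star v ⬝ᵥ v := by
    rw [star_mulVec, dotProduct_mulVec, vecMul_vecMul, ← star_eq_conjTranspose,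
      mem_unitaryGroup_iff'.mp hU, vecMul_one]
  simpa only [dotProduct, Pi.star_apply, RCLike.star_def, RCLike.conj_mul, ← RCLike.ofReal_pow,
    ← RCLike.ofReal_sum, RCLike.ofReal_inj] using hdot

end Matrix

open Matrix

section Antisymmetrize

variable {ι α R : Type*} [Fintype ι] [DecidableEq ι] [CommRing R]

def antisymmetrize (F : (ι → α) → R) (x : ι → α) : R :=
  ∑ σ : Perm ι, ((Perm.sign σ : ℤ) : R) * F (x ∘ σ)

lemma antisymmetrize_comp_perm (F : (ι → α) → R) (x : ι → α) (σ : Perm ι) :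
    antisymmetrize F (x ∘ σ) = ((Perm.sign σ : ℤ) : R) * antisymmetrize F x := by
  rw [antisymmetrize, antisymmetrize, mul_sum]
  refine Fintype.sum_equiv (Equiv.mulLeft σ) _ _ fun π => ?_
  have hsign : Perm.sign π = Perm.sign σ * Perm.sign (σ * π) := by
    rw [Perm.sign_mul, ← mul_assoc, Int.units_mul_self, one_mul]
  rw [hsign, Units.val_mul, Int.cast_mul, mul_assoc]
  rfl

lemma antisymmetrize_eq_zero_of_not_injective [NoZeroDivisors R] [CharZero R]
    (F : (ι → α) → R) {x : ι → α} (hx : ¬ Function.Injective x) : antisymmetrize F x = 0 := by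
  obtain ⟨i, j, hxij, hij⟩ := Function.not_injective_iff.mp hx
  have hswap : x ∘ swap i j = x := by
    funext t
    rcases eq_or_ne t i with rfl | hti
    · simp [hxij]
    rcases eq_or_ne t j with rfl | htj
    · simp [hxij]
    · simp [swap_apply_of_ne_of_ne hti htj]
  have h := antisymmetrize_comp_perm F x (swap i j)
  rw [hswap, Perm.sign_swap hij, Units.val_neg, Units.val_one, Int.cast_neg, Int.cast_one,
    neg_one_mul] at h
  exact CharZero.eq_neg_self_iff.mp h

lemma tensorPow_mulVec_antisymmetrize [Fintype α] (g : Matrix α α R) (F : (ι → α) → R) :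
    tensorPow ι g *ᵥ antisymmetrize F = antisymmetrize (tensorPow ι g *ᵥ F) := by
  ext x
  calc (tensorPow ι g *ᵥ antisymmetrize F) x
      = ∑ σ : Perm ι, ((Perm.sign σ : ℤ) : R) * (tensorPow ι g *ᵥ fun y => F (y ∘ σ)) x := by
        simp only [tensorPow_mulVec_apply, antisymmetrize, mul_sum]
        rw [sum_comm]
        simp only [mul_left_comm]
    _ = antisymmetrize (tensorPow ι g *ᵥ F) x := by
        simp only [tensorPow_mulVec_comp_equiv]
        rfl

end Antisymmetrize

lemma sum_eq_factorial_nsmul_sum_powersetCard {α M : Type*} [Fintype α] [LinearOrder α]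
    [AddCommMonoid M] {k : ℕ} (H : (Fin k → α) → M)
    (hperm : ∀ x (σ : Perm (Fin k)), H (x ∘ σ) = H x)
    (hinj : ∀ x, ¬ Function.Injective x → H x = 0) :
    ∑ x, H x = k.factorial • ∑ I ∈ (powersetCard k (univ : Finset α)).attach,
      H (I.1.orderEmbOfFin (mem_powersetCard.mp I.2).2) := by
  set P := (powersetCard k (univ : Finset α)).attach ×ˢ (univ : Finset (Perm (Fin k)))
  let Φ : powersetCard k (univ : Finset α) × Perm (Fin k) → Fin k → α := fun p =>
    p.1.1.orderEmbOfFin (mem_powersetCard.mp p.1.2).2 ∘ p.2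
  have hΦ_inj : Set.InjOn Φ P := by
    rintro ⟨I, σ⟩ - ⟨J, τ⟩ - h
    have hIJ : I = J := by
      have himage := congrArg (fun x => univ.image x) h
      simp only [Φ, ← image_image, image_univ_equiv, image_orderEmbOfFin_univ] at himage
      exact Subtype.ext himage
    subst hIJ
    have hστ : (σ : Fin k → Fin k) = τ := (I.1.orderEmbOfFin _).injective.comp_left h
    rw [DFunLike.coe_injective hστ]
  -- surjectivity by counting: both sides have `k! · C(|α|, k)` elements
  have hΦ_image : P.image Φ = univ.filter Function.Injective := by
    refine eq_of_subset_of_card_le (fun x hx => ?_) ?_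
    · obtain ⟨⟨I, σ⟩, -, rfl⟩ := mem_image.mp hx
      exact mem_filter.mpr ⟨mem_univ _, (RelEmbedding.injective _).comp σ.injective⟩
    · rw [Finset.card_image_of_injOn hΦ_inj, card_product, card_attach, card_powersetCard,
        Finset.card_univ, Finset.card_univ, Fintype.card_perm, Fintype.card_fin,
        ← Fintype.card_subtype, Fintype.card_congr (subtypeInjectiveEquivEmbedding _ _),
        Fintype.card_embedding_eq, Fintype.card_fin, Nat.descFactorial_eq_factorial_mul_choose,
        mul_comm]
  calc ∑ x, H x = ∑ x ∈ univ.filter Function.Injective, H x :=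
        (sum_filter_of_ne fun x _ hx => not_not.mp (mt (hinj x) hx)).symm
    _ = ∑ p ∈ P, H (Φ p) := by rw [← hΦ_image, sum_image hΦ_inj]
    _ = ∑ I ∈ (powersetCard k (univ : Finset α)).attach, ∑ σ : Perm (Fin k),
          H (I.1.orderEmbOfFin (mem_powersetCard.mp I.2).2 ∘ σ) := sum_product _ _ _
    _ = _ := by
        simp only [hperm, sum_const, Finset.card_univ, Fintype.card_perm, Fintype.card_fin,
          smul_sum]

def pairing {α R : Type*} [Mul R] (ψ : Matrix α α R) (z : Fin 6 → α) : R :=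
  ψ (z 0) (z 1) * ψ (z 2) (z 3) * ψ (z 4) (z 5)

lemma pairing_eq_prod {α R : Type*} [CommMonoid R] (ψ : Matrix α α R) (z : Fin 6 → α) :
    pairing ψ z = ∏ k : Fin 3, ψ (z (finProdFinEquiv (k, (0 : Fin 2))))
      (z (finProdFinEquiv (k, (1 : Fin 2)))) := by
  rw [Fin.prod_univ_three]
  rfl

lemma tensorPow_mulVec_pairing {α R : Type*} [Fintype α] [CommSemiring R] (g ψ : Matrix α α R) :
    tensorPow (Fin 6) g *ᵥ pairing ψ = pairing (g * ψ * gᵀ) := by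
  let e : Fin 3 × Fin 2 ≃ Fin 6 := finProdFinEquiv
  calc tensorPow (Fin 6) g *ᵥ pairing ψ
      = tensorPow (Fin 6) g *ᵥ fun y =>
          (fun z : Fin 3 × Fin 2 → α => ∏ k, ψ (z (k, 0)) (z (k, 1))) (y ∘ e) :=
        congrArg _ (funext (pairing_eq_prod ψ))
    _ = fun x => (tensorPow (Fin 3 × Fin 2) g *ᵥ fun z => ∏ k, ψ (z (k, 0)) (z (k, 1))) (x ∘ e) :=
        tensorPow_mulVec_comp_equiv g e fun z => ∏ k, ψ (z (k, 0)) (z (k, 1))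
    _ = pairing (g * ψ * gᵀ) := by
        rw [tensorPow_mulVec_prod g fun _ p => ψ (p 0) (p 1), tensorPow_fin_two_mulVec]
        exact funext fun x => (pairing_eq_prod _ x).symm

lemma pfSix_eq_antisymmetrize_pairing (n : ℕ) (ψ : Matrix (Fin n) (Fin n) ℂ)
    (I : Finset (Fin n)) (hI : I.card = 6) :
    pfSix n ψ I hI = antisymmetrize (pairing ψ) (I.orderEmbOfFin hI) := by
  simp only [pfSix, antisymmetrize, pairing, mul_assoc]
  rfl

lemma sum_norm_sq_antisymmetrize_pairing (n : ℕ) (ψ : Matrix (Fin n) (Fin n) ℂ) :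
    ∑ x, ‖antisymmetrize (pairing ψ) x‖ ^ 2
      = (6 : ℕ).factorial • ∑ I ∈ (powersetCard 6 (univ : Finset (Fin n))).attach,
          ‖pfSix n ψ I.1 (mem_powersetCard.mp I.2).2‖ ^ 2 := by
  simp only [pfSix_eq_antisymmetrize_pairing]
  refine sum_eq_factorial_nsmul_sum_powersetCard _ (fun x σ => ?_) (fun x hx => ?_)
  · rcases Int.units_eq_one_or (Perm.sign σ) with hσ | hσ <;>
      simp [antisymmetrize_comp_perm, hσ]
  · simp [antisymmetrize_eq_zero_of_not_injective _ hx]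

theorem stmt_17_general (n : ℕ)
    (ψ : Matrix (Fin n) (Fin n) ℂ)
    (g : Matrix (Fin n) (Fin n) ℂ) (hg : g * g.conjTranspose = 1)
    (ψ' : Matrix (Fin n) (Fin n) ℂ) (hψ' : ψ' = g * ψ * g.transpose) :
    ∑ I ∈ (Finset.powersetCard 6 (Finset.univ : Finset (Fin n))).attach,
        ‖pfSix n ψ' I.1 ((Finset.mem_powersetCard.mp I.2).2)‖ ^ 2
    = ∑ I ∈ (Finset.powersetCard 6 (Finset.univ : Finset (Fin n))).attach,
        ‖pfSix n ψ I.1 ((Finset.mem_powersetCard.mp I.2).2)‖ ^ 2 := by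
  have hU : tensorPow (Fin 6) g ∈ unitaryGroup (Fin 6 → Fin n) ℂ :=
    tensorPow_mem_unitaryGroup (mem_unitaryGroup_iff.mpr hg)
  have h := sum_norm_sq_antisymmetrize_pairing n ψ'
  rw [hψ', ← tensorPow_mulVec_pairing, ← tensorPow_mulVec_antisymmetrize,
    sum_norm_sq_mulVec_of_mem_unitaryGroup hU, sum_norm_sq_antisymmetrize_pairing] at h
  rw [hψ']
  exact (nsmul_right_injective (Nat.factorial_ne_zero 6) h).symm

/-- `Σ_{|I|=6} |Pf_I(ψ)|²` is invariant under `ψ ↦ gψgᵀ` for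
unitary `g`. -/
theorem stmt_17 (n : ℕ) (hn : 1 ≤ n)
    (ψ : Matrix (Fin n) (Fin n) ℂ) (hψ : ψ.transpose = -ψ)
    (g : Matrix (Fin n) (Fin n) ℂ) (hg : g * g.conjTranspose = 1)
    (ψ' : Matrix (Fin n) (Fin n) ℂ) (hψ' : ψ' = g * ψ * g.transpose) :
    ∑ I ∈ (Finset.powersetCard 6 (Finset.univ : Finset (Fin n))).attach,
        ‖pfSix n ψ' I.1 ((Finset.mem_powersetCard.mp I.2).2)‖ ^ 2
    = ∑ I ∈ (Finset.powersetCard 6 (Finset.univ : Finset (Fin n))).attach,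
        ‖pfSix n ψ I.1 ((Finset.mem_powersetCard.mp I.2).2)‖ ^ 2 :=
  stmt_17_general n ψ g hg ψ' hψ'
end
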